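/- arXiv:1504.01136 — 3 statements merged into one kernel-verified Lean document; each statement's English description precedes it below -/
import Mathlib

section
/- Let d¹, d², d³ be 3×3 real matrices and for ξ ∈ ℝ³ set d(ξ) = ξ₁d¹ + ξ₂d² + ξ₃d³. If for every rotation O = (o₁,o₂,o₃)ᵀ ∈ SO(3) (rows oᵢ) one has dⁱ = O·d(oᵢ)·Oᵀ for i = 1,2,3, then there is a scalar δ such that d¹ = δ·(E₂₃ − E₃₂), d² = δ·(E₃₁ − E₁₃), d³ = δ·(E₁₂ − E₂₁), where Eᵢⱼ denotes the matrix with 1 in entry (i,j) and 0 elsewhere. -/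
/-!
The hypothesis says that the 3-tensor `T i a b = d i a b` is invariant under `SO(3)`; it is enough
to test it against the rotations that permute the coordinate axes up to sign. The half-turns about
the axes kill every entry with a repeated index, and the 3-cycle of the axes together with the
rotations `-(transposition)` show that the remaining entries are `ε i a b * T 0 1 2`.
-/

open Matrix Equiv

namespace Matrix

variable {ι R : Type*} [Fintype ι] [DecidableEq ι] [CommRing R]

/-- The matrix whose `i`-th row is `s i • e (σ i)`. -/
def signedPermMatrix (σ : Perm ι) (s : ι → R) : Matrix ι ι R :=
  diagonal s * σ.permMatrix R

section SignedPermMatrix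

variable (σ : Perm ι) (s : ι → R)

theorem signedPermMatrix_apply (i j : ι) :
    signedPermMatrix σ s i j = if σ i = j then s i else 0 := by
  simp [signedPermMatrix, diagonal_mul, PEquiv.toMatrix_apply, eq_comm]

theorem det_signedPermMatrix : (signedPermMatrix σ s).det = (∏ i, s i) * Perm.sign σ := by
  simp [signedPermMatrix]

theorem signedPermMatrix_mul_transpose (hs : ∀ i, s i * s i = 1) :
    signedPermMatrix σ s * (signedPermMatrix σ s)ᵀ = 1 := by
  have hP : σ.permMatrix R * σ⁻¹.permMatrix R = 1 := by
    rw [← permMatrix_mul, inv_mul_cancel, permMatrix_one]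
  rw [signedPermMatrix, transpose_mul, transpose_permMatrix, diagonal_transpose,
    Matrix.mul_assoc, ← Matrix.mul_assoc (σ.permMatrix R), hP, Matrix.one_mul,
    diagonal_mul_diagonal, ← diagonal_one]
  exact congrArg diagonal (funext hs)

theorem signedPermMatrix_conj_apply (M : Matrix ι ι R) (a b : ι) :
    (signedPermMatrix σ s * M * (signedPermMatrix σ s)ᵀ) a b = s a * s b * M (σ a) (σ b) := by
  simp only [mul_apply, transpose_apply, signedPermMatrix_apply, ite_mul, zero_mul, mul_ite,
    mul_zero, Finset.sum_ite_eq, Finset.mem_univ, if_true]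
  ring

theorem sum_signedPermMatrix_smul {M : Type*} [AddCommMonoid M] [Module R M] (v : ι → M)
    (i : ι) : ∑ j, signedPermMatrix σ s i j • v j = s i • v (σ i) := by
  simp [signedPermMatrix_apply, ite_smul]

end SignedPermMatrix

def IsRotationInvariant (d : ι → Matrix ι ι R) : Prop :=
  ∀ O : Matrix ι ι R, O * Oᵀ = 1 → O.det = 1 → ∀ i, d i = O * (∑ j, O i j • d j) * Oᵀ

namespace IsRotationInvariant

section General

variable {d : ι → Matrix ι ι R} (hd : IsRotationInvariant d)
include hd

theorem apply_eq {σ : Perm ι} {s : ι → R} (hs : ∀ i, s i * s i = 1)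
    (hdet : (∏ i, s i) * Perm.sign σ = 1) (i a b : ι) :
    d i a b = s i * s a * s b * d (σ i) (σ a) (σ b) := by
  have h := congrFun (congrFun (hd _ (signedPermMatrix_mul_transpose σ s hs)
    (by rw [det_signedPermMatrix, hdet]) i) a) b
  rw [sum_signedPermMatrix_smul, signedPermMatrix_conj_apply, smul_apply, smul_eq_mul] at h
  linear_combination h

theorem apply_eq_zero_of_mul_eq_neg_one [IsAddTorsionFree R] {s : ι → R}
    (hs : ∀ i, s i * s i = 1) (hprod : ∏ i, s i = 1) {i a b : ι}
    (hsign : s i * s a * s b = -1) : d i a b = 0 := by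
  have e := hd.apply_eq (σ := 1) hs (by simp [hprod]) i a b
  rw [hsign] at e
  exact self_eq_neg.mp (by simpa using e)

end General

section Dim3

variable {d : Fin 3 → Matrix (Fin 3) (Fin 3) R} (hd : IsRotationInvariant d)
include hd

theorem apply_eq_zero [IsAddTorsionFree R] {i a b : Fin 3} (h : i = a ∨ a = b ∨ i = b) :
    d i a b = 0 := by
  have key : ∀ x y : Fin 3, d x x y = 0 ∧ d x y x = 0 ∧ d y x x = 0 := by
    intro x y
    -- the half-turn about the axis `e (y + 1)`, which reverses `e y`
    set s : Fin 3 → R := fun j => if j = y + 1 then 1 else -1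
    have hs : ∀ j, s j * s j = 1 := fun j => by by_cases hj : j = y + 1 <;> simp [s, hj]
    have hprod : ∏ j, s j = 1 := by fin_cases y <;> simp [s, Fin.prod_univ_three]
    have hy : s y = -1 := by fin_cases y <;> simp [s]
    have hx : s x * s x = 1 := hs x
    refine ⟨?_, ?_, ?_⟩ <;> apply hd.apply_eq_zero_of_mul_eq_neg_one hs hprod
    · rw [hx, hy, one_mul]
    · rw [mul_right_comm, hx, hy, one_mul]
    · rw [mul_assoc, hx, hy, mul_one]
  rcases h with rfl | rfl | rfl
  · exact (key i b).1
  · exact (key a i).2.2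
  · exact (key i a).2.1

theorem apply_finRotate (i a b : Fin 3) : d (i + 1) (a + 1) (b + 1) = d i a b := by
  have := hd.apply_eq (σ := finRotate 3) (s := 1) (by simp) (by simp [sign_finRotate]) i a b
  simpa [finRotate_apply] using this.symm

theorem apply_swap {x y : Fin 3} (hxy : x ≠ y) (i a b : Fin 3) :
    d (Equiv.swap x y i) (Equiv.swap x y a) (Equiv.swap x y b) = -d i a b := by
  rw [hd.apply_eq (σ := Equiv.swap x y) (s := -1) (by simp) (by norm_num [hxy]) i a b]
  simp

end Dim3

end IsRotationInvariant

end Matrix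

theorem stmt_2 (d : Fin 3 → Matrix (Fin 3) (Fin 3) ℝ)
    (h : ∀ O : Matrix (Fin 3) (Fin 3) ℝ, O * Oᵀ = 1 → O.det = 1 →
      ∀ i : Fin 3, d i = O * (∑ j : Fin 3, O i j • d j) * Oᵀ) :
    ∃ δ : ℝ,
      d 0 = δ • (Matrix.single 1 2 (1 : ℝ) - Matrix.single 2 1 1) ∧
      d 1 = δ • (Matrix.single 2 0 (1 : ℝ) - Matrix.single 0 2 1) ∧
      d 2 = δ • (Matrix.single 0 1 (1 : ℝ) - Matrix.single 1 0 1) := by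
  have hd : IsRotationInvariant d := h
  have h120 : d 1 2 0 = d 0 1 2 := hd.apply_finRotate 0 1 2
  have h201 : d 2 0 1 = d 0 1 2 := by simpa using (hd.apply_finRotate 1 2 0).trans h120
  have h021 : d 0 2 1 = -d 0 1 2 := by
    simpa [swap_apply_def] using hd.apply_swap (x := 1) (y := 2) (by decide) 0 1 2
  have h102 : d 1 0 2 = -d 0 1 2 := by
    simpa [swap_apply_def] using hd.apply_swap (x := 0) (y := 1) (by decide) 0 1 2
  have h210 : d 2 1 0 = -d 0 1 2 := by
    simpa [swap_apply_def] using hd.apply_swap (x := 0) (y := 2) (by decide) 0 1 2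
  refine ⟨d 0 1 2, ?_, ?_, ?_⟩ <;> ext a b <;> fin_cases a <;> fin_cases b <;>
    simp [h021, h102, h120, h201, h210] <;> exact hd.apply_eq_zero (by decide)
end

section
/- One-dimensional transport bilinear estimate: let λ₁ ≠ λ₂ be real constants and let φᵢ (i = 1,2) solve ∂ₜφᵢ + λᵢ∂ₓφᵢ = Fᵢ on [0,T] × ℝ with φᵢ(0,·) = φ₀ⁱ. Then ‖φ₁φ₂‖_{L¹([0,T]×ℝ)} ≤ C(λ₁,λ₂)·(‖φ₀¹‖_{L¹(ℝ)} + ‖F₁‖_{L¹([0,T]×ℝ)})·(‖φ₀²‖_{L¹(ℝ)} + ‖F₂‖_{L¹([0,T]×ℝ)}), with C depending only on |λ₁ − λ₂|⁻¹ (in particular C = 1/|λ₁−λ₂| suffices). -/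
/-!
Along the characteristic `x = y + λᵢ t`, `φᵢ` changes at the rate `Fᵢ = (∂ₜ + λᵢ ∂ₓ) φᵢ`, so on the
strip `|φᵢ (t, x)| ≤ Bᵢ (x - λᵢ t)`, where `Bᵢ y` is `|φᵢ (0, y)|` plus the integral of `|Fᵢ|` along
the characteristic through `(0, y)`; by Tonelli, `‖Bᵢ‖₁ = ‖φᵢ(0, ·)‖₁ + ‖Fᵢ‖₁`. The product bound
`B₁ (x - λ₁ t) B₂ (x - λ₂ t)` is then integrated over the whole plane: the change of variables
`(t, x) ↦ (x - λ₁ t, x - λ₂ t)` has Jacobian `|λ₁ - λ₂|`, which gives `|λ₁ - λ₂|⁻¹ ‖B₁‖₁ ‖B₂‖₁`.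
-/

open MeasureTheory

/-- Partial derivative in the first (time) variable. -/
noncomputable def pt (f : ℝ × ℝ → ℝ) : ℝ × ℝ → ℝ :=
  fun p => deriv (fun t => f (t, p.2)) p.1

/-- Partial derivative in the second (space) variable. -/
noncomputable def px (f : ℝ × ℝ → ℝ) : ℝ × ℝ → ℝ :=
  fun p => deriv (fun x => f (p.1, x)) p.2

open Set
open scoped ENNReal

lemma lintegral_comp_add_mul {g : ℝ → ℝ≥0∞} (hg : Measurable g) (u : ℝ) {c : ℝ} (hc : c ≠ 0) :
    ∫⁻ t, g (u + c * t) = (ENNReal.ofReal |c|)⁻¹ * ∫⁻ v, g v := by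
  have hmap := lintegral_map (μ := volume) (hg.comp (measurable_const_add u))
    (measurable_const_mul c)
  rw [Real.map_volume_mul_left hc, lintegral_smul_measure, abs_inv,
    ENNReal.ofReal_inv_of_pos (abs_pos.2 hc), smul_eq_mul] at hmap
  simpa only [Function.comp_def, lintegral_add_left_eq_self (fun v => g v)] using hmap.symm

lemma lintegral_comp_sub_mul_mul_comp_sub_mul {a b : ℝ} (hab : a ≠ b) {f g : ℝ → ℝ≥0∞}
    (hf : Measurable f) (hg : Measurable g) :
    ∫⁻ p : ℝ × ℝ, f (p.2 - a * p.1) * g (p.2 - b * p.1)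
      = (ENNReal.ofReal |a - b|)⁻¹ * ((∫⁻ u, f u) * ∫⁻ v, g v) := by
  have hshift (t : ℝ) : ∫⁻ x, f (x - a * t) * g (x - b * t)
      = ∫⁻ u, f u * g (u + (a - b) * t) := by
    rw [← lintegral_add_right_eq_self _ (a * t)]
    congr 1 with u
    ring_nf
  have hinner (u : ℝ) : ∫⁻ t, f u * g (u + (a - b) * t)
      = f u * ((ENNReal.ofReal |a - b|)⁻¹ * ∫⁻ v, g v) := by
    rw [lintegral_const_mul _ (by fun_prop), lintegral_comp_add_mul hg u (sub_ne_zero.2 hab)]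
  rw [Measure.volume_eq_prod, lintegral_prod _ (by fun_prop)]
  simp only [hshift]
  rw [lintegral_lintegral_swap (by fun_prop)]
  simp only [hinner]
  rw [lintegral_mul_const _ hf]
  ring

lemma pt_add_mul_px {φ : ℝ × ℝ → ℝ} {p : ℝ × ℝ} (hφ : DifferentiableAt ℝ φ p) (lam : ℝ) :
    pt φ p + lam * px φ p = fderiv ℝ φ p (1, lam) := by
  have ht : HasDerivAt (fun t => φ (t, p.2)) (fderiv ℝ φ p (1, 0)) p.1 :=
    hφ.hasFDerivAt.comp_hasDerivAt p.1 ((hasDerivAt_id p.1).prodMk (hasDerivAt_const p.1 p.2))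
  have hx : HasDerivAt (fun x => φ (p.1, x)) (fderiv ℝ φ p (0, 1)) p.2 :=
    hφ.hasFDerivAt.comp_hasDerivAt p.2 ((hasDerivAt_const p.2 p.1).prodMk (hasDerivAt_id p.2))
  have hdir : ((1 : ℝ), lam) = ((1 : ℝ), (0 : ℝ)) + lam • ((0 : ℝ), (1 : ℝ)) := by simp
  rw [pt, px, ht.deriv, hx.deriv, hdir, map_add, map_smul, smul_eq_mul]

lemma eq_add_integral_fderiv_characteristic {φ : ℝ × ℝ → ℝ} (hφ : ContDiff ℝ 1 φ)
    (lam y t : ℝ) :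
    φ (t, y + lam * t) = φ (0, y) + ∫ s in (0 : ℝ)..t, fderiv ℝ φ (s, y + lam * s) (1, lam) := by
  have hderiv (s : ℝ) : HasDerivAt (fun s => φ (s, y + lam * s))
      (fderiv ℝ φ (s, y + lam * s) (1, lam)) s := by
    have hline : HasDerivAt (fun s : ℝ => y + lam * s) lam s := by
      simpa using ((hasDerivAt_id s).const_mul lam).const_add y
    exact (hφ.differentiable one_ne_zero _).hasFDerivAt.comp_hasDerivAt s
      ((hasDerivAt_id s).prodMk hline)
  have hcont : Continuous fun s => fderiv ℝ φ (s, y + lam * s) (1, lam) :=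
    ((hφ.continuous_fderiv one_ne_zero).comp (by fun_prop)).clm_apply continuous_const
  rw [intervalIntegral.integral_eq_sub_of_hasDerivAt (fun s _ => hderiv s)
    (hcont.intervalIntegrable 0 t)]
  simp

noncomputable def characteristicBound (T lam : ℝ) (φ : ℝ × ℝ → ℝ) (y : ℝ) : ℝ≥0∞ :=
  ENNReal.ofReal |φ (0, y)|
    + ∫⁻ s in Icc 0 T, ENNReal.ofReal |fderiv ℝ φ (s, y + lam * s) (1, lam)|

lemma ofReal_abs_le_characteristicBound {φ : ℝ × ℝ → ℝ} (hφ : ContDiff ℝ 1 φ) {T t : ℝ}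
    (ht : t ∈ Icc 0 T) (lam x : ℝ) :
    ENNReal.ofReal |φ (t, x)| ≤ characteristicBound T lam φ (x - lam * t) := by
  have hx : (t, x) = (t, x - lam * t + lam * t) := by ring_nf
  simp only [characteristicBound, ← Real.enorm_eq_ofReal_abs]
  rw [hx, eq_add_integral_fderiv_characteristic hφ, intervalIntegral.integral_of_le ht.1]
  refine (enorm_add_le _ _).trans (add_le_add_right ?_ _)
  exact (enorm_integral_le_lintegral_enorm _).trans
    (lintegral_mono_set (Ioc_subset_Icc_self.trans (Icc_subset_Icc_right ht.2)))

lemma measurable_characteristicBound {φ : ℝ × ℝ → ℝ} (hφ : ContDiff ℝ 1 φ) (T lam : ℝ) :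
    Measurable (characteristicBound T lam φ) := by
  have hφc := hφ.continuous
  have hG : Continuous fun p : ℝ × ℝ => fderiv ℝ φ p (1, lam) :=
    (hφ.continuous_fderiv one_ne_zero).clm_apply continuous_const
  have hforcing : Measurable fun q : ℝ × ℝ =>
      ENNReal.ofReal |fderiv ℝ φ (q.1, q.2 + lam * q.1) (1, lam)| := by fun_prop
  exact (by fun_prop : Measurable fun y => ENNReal.ofReal |φ (0, y)|).add
    hforcing.lintegral_prod_left'

lemma lintegral_characteristicBound {φ : ℝ × ℝ → ℝ} (hφ : ContDiff ℝ 1 φ) (T lam : ℝ) :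
    ∫⁻ y, characteristicBound T lam φ y
      = (∫⁻ x, ENNReal.ofReal |φ (0, x)|)
        + ∫⁻ p in Icc 0 T ×ˢ univ, ENNReal.ofReal |fderiv ℝ φ p (1, lam)| := by
  have hφc := hφ.continuous
  have hG : Continuous fun p : ℝ × ℝ => fderiv ℝ φ p (1, lam) :=
    (hφ.continuous_fderiv one_ne_zero).clm_apply continuous_const
  unfold characteristicBound
  rw [lintegral_add_left (by fun_prop), lintegral_lintegral_swap (by fun_prop),
    Measure.volume_eq_prod, setLIntegral_prod _ (by fun_prop), Measure.restrict_univ]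
  congr 1
  refine lintegral_congr fun s => ?_
  exact lintegral_add_right_eq_self (fun y => ENNReal.ofReal |fderiv ℝ φ (s, y) (1, lam)|) _

theorem stmt_8_general (T : ℝ) (lam : Fin 2 → ℝ) (hlam : lam 0 ≠ lam 1)
    (φ F : Fin 2 → ℝ × ℝ → ℝ) (hφ : ∀ i, ContDiff ℝ 1 (φ i))
    (heq : ∀ i, ∀ p : ℝ × ℝ, p.1 ∈ Set.Icc 0 T →
      pt (φ i) p + lam i * px (φ i) p = F i p) :
    ∫⁻ p : ℝ × ℝ in Set.Icc 0 T ×ˢ Set.univ, ENNReal.ofReal |φ 0 p * φ 1 p|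
      ≤ (ENNReal.ofReal |lam 0 - lam 1|)⁻¹
        * ((∫⁻ x : ℝ, ENNReal.ofReal |φ 0 (0, x)|)
            + ∫⁻ p : ℝ × ℝ in Set.Icc 0 T ×ˢ Set.univ, ENNReal.ofReal |F 0 p|)
        * ((∫⁻ x : ℝ, ENNReal.ofReal |φ 1 (0, x)|)
            + ∫⁻ p : ℝ × ℝ in Set.Icc 0 T ×ˢ Set.univ, ENNReal.ofReal |F 1 p|) := by
  have hS : MeasurableSet (Icc 0 T ×ˢ univ : Set (ℝ × ℝ)) := measurableSet_Icc.prod .univ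
  have hforcing (i : Fin 2) : ∫⁻ p in Icc 0 T ×ˢ univ, ENNReal.ofReal |fderiv ℝ (φ i) p (1, lam i)|
      = ∫⁻ p in Icc 0 T ×ˢ univ, ENNReal.ofReal |F i p| :=
    setLIntegral_congr_fun hS fun p hp => by
      rw [← heq i p hp.1, pt_add_mul_px ((hφ i).differentiable one_ne_zero p)]
  set B : Fin 2 → ℝ → ℝ≥0∞ := fun i => characteristicBound T (lam i) (φ i) with hB
  calc ∫⁻ p in Icc 0 T ×ˢ univ, ENNReal.ofReal |φ 0 p * φ 1 p|
      ≤ ∫⁻ p : ℝ × ℝ in Icc 0 T ×ˢ univ, B 0 (p.2 - lam 0 * p.1) * B 1 (p.2 - lam 1 * p.1) := by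
        refine setLIntegral_mono' hS fun p hp => ?_
        rw [abs_mul, ENNReal.ofReal_mul (abs_nonneg _)]
        exact mul_le_mul' (ofReal_abs_le_characteristicBound (hφ 0) hp.1 _ _)
          (ofReal_abs_le_characteristicBound (hφ 1) hp.1 _ _)
    _ ≤ ∫⁻ p : ℝ × ℝ, B 0 (p.2 - lam 0 * p.1) * B 1 (p.2 - lam 1 * p.1) :=
        setLIntegral_le_lintegral _ _
    _ = (ENNReal.ofReal |lam 0 - lam 1|)⁻¹ * ((∫⁻ y, B 0 y) * ∫⁻ y, B 1 y) :=
        lintegral_comp_sub_mul_mul_comp_sub_mul hlam (measurable_characteristicBound (hφ 0) _ _)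
          (measurable_characteristicBound (hφ 1) _ _)
    _ = _ := by
        simp only [hB, lintegral_characteristicBound (hφ _), hforcing, mul_assoc]

theorem stmt_8 (T : ℝ) (hT : 0 ≤ T) (lam : Fin 2 → ℝ) (hlam : lam 0 ≠ lam 1)
    (φ F : Fin 2 → ℝ × ℝ → ℝ) (hφ : ∀ i, ContDiff ℝ 1 (φ i))
    (heq : ∀ i, ∀ p : ℝ × ℝ, p.1 ∈ Set.Icc 0 T →
      pt (φ i) p + lam i * px (φ i) p = F i p) :
    ∫⁻ p : ℝ × ℝ in Set.Icc 0 T ×ˢ Set.univ, ENNReal.ofReal |φ 0 p * φ 1 p|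
      ≤ (ENNReal.ofReal |lam 0 - lam 1|)⁻¹
        * ((∫⁻ x : ℝ, ENNReal.ofReal |φ 0 (0, x)|)
            + ∫⁻ p : ℝ × ℝ in Set.Icc 0 T ×ˢ Set.univ, ENNReal.ofReal |F 0 p|)
        * ((∫⁻ x : ℝ, ENNReal.ofReal |φ 1 (0, x)|)
            + ∫⁻ p : ℝ × ℝ in Set.Icc 0 T ×ˢ Set.univ, ENNReal.ofReal |F 1 p|) :=
  stmt_8_general T lam hlam φ F hφ heq
end

section
/- Separation of characteristic cones: let λ_a ≠ λ_b be positive reals and 0 < ε₀ < |λ_a − λ_b|/(2λ_b). If r ≥ ε₀τ, r ≥ ε₀⁻¹|λ_aτ − r|, and |λ_bτ − r| ≤ s ≤ λ_bτ + r with τ, r, s > 0, then (ε₀/(λ_b + ε₀))·s ≤ r ≤ (2λ_a/|λ_a − λ_b|)·s. -/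
/-! The lower bound follows from `s ≤ λ_b τ + r` and `ε₀ τ ≤ r`. For the upper bound, eliminate `τ`
from the two cone conditions: `r (λ_b - λ_a) = λ_a (λ_b τ - r) - λ_b (λ_a τ - r)`, so
`r |λ_a - λ_b| ≤ λ_a s + λ_b ε₀ r`, and `2 λ_b ε₀ < |λ_a - λ_b|` absorbs the last term. -/

theorem abs_mul_abs_sub_le (a b τ r : ℝ) :
    |r| * |a - b| ≤ |a| * |b * τ - r| + |b| * |a * τ - r| :=
  calc |r| * |a - b|
      = |a * (b * τ - r) - b * (a * τ - r)| := by
        rw [← abs_mul, abs_sub_comm]; congr 1; ring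
    _ ≤ |a * (b * τ - r)| + |b * (a * τ - r)| := abs_sub _ _
    _ = |a| * |b * τ - r| + |b| * |a * τ - r| := by rw [abs_mul, abs_mul]

theorem div_add_mul_le_of_le_add {b ε τ r s : ℝ} (hb : 0 ≤ b) (hε : 0 < ε)
    (hτr : ε * τ ≤ r) (hs : s ≤ b * τ + r) :
    ε / (b + ε) * s ≤ r := by
  rw [div_mul_eq_mul_div, div_le_iff₀ (by positivity)]
  calc ε * s ≤ ε * (b * τ + r) := mul_le_mul_of_nonneg_left hs hε.le
    _ = b * (ε * τ) + ε * r := by ring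
    _ ≤ b * r + ε * r := by gcongr
    _ = r * (b + ε) := by ring

theorem le_two_mul_div_abs_sub_mul {a b ε τ r s : ℝ} (ha : 0 ≤ a) (hb : 0 ≤ b) (hε : 0 ≤ ε)
    (hr : 0 ≤ r) (hεab : ε * (2 * b) < |a - b|)
    (har : |a * τ - r| ≤ ε * r) (hbr : |b * τ - r| ≤ s) :
    r ≤ 2 * a / |a - b| * s := by
  have hab : 0 < |a - b| := lt_of_le_of_lt (by positivity) hεab
  have elim : r * |a - b| ≤ a * s + b * (ε * r) := by
    have := abs_mul_abs_sub_le a b τ r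
    rw [abs_of_nonneg hr, abs_of_nonneg ha, abs_of_nonneg hb] at this
    calc r * |a - b| ≤ a * |b * τ - r| + b * |a * τ - r| := this
      _ ≤ a * s + b * (ε * r) := by gcongr
  have absorb : 2 * (b * (ε * r)) ≤ r * |a - b| :=
    calc 2 * (b * (ε * r)) = r * (ε * (2 * b)) := by ring
      _ ≤ r * |a - b| := mul_le_mul_of_nonneg_left hεab.le hr
  rw [div_mul_eq_mul_div, le_div_iff₀ hab]
  linarith

theorem stmt_15_general (lamA lamB ε₀ τ r s : ℝ)
    (hA : 0 < lamA) (hB : 0 < lamB)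
    (hε : 0 < ε₀) (hε' : ε₀ < |lamA - lamB| / (2 * lamB))
    (hr : 0 < r)
    (h1 : ε₀ * τ ≤ r) (h2 : ε₀⁻¹ * |lamA * τ - r| ≤ r)
    (h3 : |lamB * τ - r| ≤ s) (h4 : s ≤ lamB * τ + r) :
    (ε₀ / (lamB + ε₀)) * s ≤ r ∧ r ≤ (2 * lamA / |lamA - lamB|) * s := by
  have hA_cone : |lamA * τ - r| ≤ ε₀ * r := (inv_mul_le_iff₀ hε).1 h2
  have hgap : ε₀ * (2 * lamB) < |lamA - lamB| := (lt_div_iff₀ (by positivity)).1 hε'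
  exact ⟨div_add_mul_le_of_le_add hB.le hε h1 h4,
    le_two_mul_div_abs_sub_mul hA.le hB.le hε.le hr.le hgap hA_cone h3⟩

theorem stmt_15 (lamA lamB ε₀ τ r s : ℝ)
    (hA : 0 < lamA) (hB : 0 < lamB) (hne : lamA ≠ lamB)
    (hε : 0 < ε₀) (hε' : ε₀ < |lamA - lamB| / (2 * lamB))
    (hτ : 0 < τ) (hr : 0 < r) (hs : 0 < s)
    (h1 : ε₀ * τ ≤ r) (h2 : ε₀⁻¹ * |lamA * τ - r| ≤ r)
    (h3 : |lamB * τ - r| ≤ s) (h4 : s ≤ lamB * τ + r) :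
    (ε₀ / (lamB + ε₀)) * s ≤ r ∧ r ≤ (2 * lamA / |lamA - lamB|) * s :=
  stmt_15_general lamA lamB ε₀ τ r s hA hB hε hε' hr h1 h2 h3 h4
end
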